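/- Let R be an LG-ring and let (M, q) be a nonsingular quadratic form over R (a quadratic space). Then the following are equivalent: (i) there exists m ∈ M with q(m) ∈ R^×; (ii) M is faithfully projective. -/

import Mathlib

open TensorProduct

universe u v

/-- A commutative ring `R` is an LG-ring ("local-global ring") if every multivariate
polynomial over `R` that represents a unit over every residue field `R/𝔪` at a maximal
ideal `𝔪` already represents a unit over `R`. -/
def IsLGRing (R : Type*) [CommRing R] : Prop :=
  ∀ n : ℕ, 1 ≤ n → ∀ f : MvPolynomial (Fin n) R,
    (∀ 𝔪 : Ideal R, 𝔪.IsMaximal →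
      ∃ v : Fin n → R ⧸ 𝔪, IsUnit (MvPolynomial.eval v
        (MvPolynomial.map (Ideal.Quotient.mk 𝔪) f))) →
    ∃ u : Fin n → R, IsUnit (MvPolynomial.eval u f)

/-- A quadratic form `q` on `M` is nonsingular if for every field `F` which is an
`R`-algebra, the base change `q_F` (the unique quadratic form on `F ⊗_R M` with
`q_F(t ⊗ m) = t² q(m)` whose polar form is the base change of the polar form of `q`)
has trivial radical. -/
def IsNonsingularQF {R : Type u} {M : Type v} [CommRing R] [AddCommGroup M] [Module R M]
    (q : QuadraticForm R M) : Prop :=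
  ∀ (F : Type u) [Field F] [Algebra R F],
    ∀ Q : QuadraticForm F (F ⊗[R] M),
      (∀ (t : F) (m : M), Q (t ⊗ₜ[R] m) = t ^ 2 * algebraMap R F (q m)) →
      (∀ (t t' : F) (m m' : M),
        QuadraticMap.polar Q (t ⊗ₜ[R] m) (t' ⊗ₜ[R] m') =
          t * t' * algebraMap R F (QuadraticMap.polar q m m')) →
      ∀ z : F ⊗[R] M, Q z = 0 → (∀ w : F ⊗[R] M, QuadraticMap.polar Q z w = 0) → z = 0

/-!
If `q m` is a unit, every `a` annihilating `M` satisfies `a² q m = q (a • m) = 0`, hence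
`a² = 0`. For a finite projective module, Nakayama's lemma applied to the trace ideal shows that
the annihilator is generated by an idempotent `e`; then `e = e² = 0`, so `M` is faithful.

Conversely, as `M` is projective, `q m = B m m` for a bilinear form `B`, and the base change of
`B` to `R ⧸ 𝔪` realises the form `q_{R/𝔪}` of the nonsingularity hypothesis. If `M` is
faithful then `(R ⧸ 𝔪) ⊗ M ≠ 0` by Nakayama, so nonsingularity forbids `q` to vanish modulo `𝔪`.
Pulling `q` back along a surjection `Rⁿ → M` turns it into a quadratic polynomial that represents
a unit modulo every maximal ideal, and the LG property produces a unit value of `q`.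
-/

theorem LinearMap.BilinMap.toQuadraticMap_surjective_of_projective
    {R M N : Type*} [CommRing R] [AddCommGroup M] [Module R M] [AddCommGroup N] [Module R N]
    [Module.Projective R M] :
    Function.Surjective (LinearMap.BilinMap.toQuadraticMap : LinearMap.BilinMap R M N → _) := by
  intro q
  obtain ⟨s, hs⟩ := Module.projective_def'.mp ‹Module.Projective R M›
  obtain ⟨B, hB⟩ := LinearMap.BilinMap.toQuadraticMap_surjective
    (q.comp (Finsupp.linearCombination R _root_.id))
  refine ⟨B.compl₁₂ s s, QuadraticMap.ext fun m => ?_⟩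
  have := congr($hB (s m))
  have hsm : Finsupp.linearCombination R _root_.id (s m) = m := congr($hs m)
  simpa [hsm] using this

namespace Module

variable (R M : Type*) [CommRing R] [AddCommGroup M] [Module R M]

def traceIdeal : Ideal R := ⨆ f : Dual R M, LinearMap.range f

theorem traceIdeal_mul_annihilator : traceIdeal R M * annihilator R M = ⊥ := by
  rw [traceIdeal, Submodule.iSup_mul, iSup_eq_bot]
  intro f
  refine le_bot_iff.mp (Submodule.mul_le.mpr ?_)
  rintro _ ⟨m, rfl⟩ r hr
  rw [Submodule.mem_bot, mul_comm, ← smul_eq_mul, ← map_smul, mem_annihilator.mp hr, map_zero]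

theorem top_le_traceIdeal_smul_top [Projective R M] :
    (⊤ : Submodule R M) ≤ traceIdeal R M • ⊤ := by
  obtain ⟨s, hs⟩ := projective_def'.mp ‹Projective R M›
  intro m _
  rw [← show Finsupp.linearCombination R id (s m) = m from congr($hs m),
    Finsupp.linearCombination_apply]
  refine Submodule.finsuppSum_mem _ _ _ _ fun n _ => Submodule.smul_mem_smul ?_ trivial
  exact Ideal.mem_iSup_of_mem (Finsupp.lapply n ∘ₗ s) (LinearMap.mem_range_self _ m)

theorem exists_mem_annihilator_forall_mul_eq [Module.Finite R M] [Projective R M] :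
    ∃ e ∈ annihilator R M, ∀ r ∈ annihilator R M, r * e = r := by
  obtain ⟨e, he, hann⟩ := Submodule.exists_sub_one_mem_and_smul_eq_zero_of_fg_of_le_smul
    (traceIdeal R M) ⊤ Finite.fg_top (top_le_traceIdeal_smul_top R M)
  refine ⟨e, mem_annihilator.mpr fun m => hann m trivial, fun r hr => ?_⟩
  have : (e - 1) * r = 0 := by
    rw [← Submodule.mem_bot R, ← traceIdeal_mul_annihilator R M]
    exact Ideal.mul_mem_mul he hr
  linear_combination this

end Module

theorem QuadraticMap.faithfulSMul_of_isUnit {R M : Type*} [CommRing R] [AddCommGroup M]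
    [Module R M] [Module.Finite R M] [Module.Projective R M] (q : QuadraticForm R M) {m : M}
    (hm : IsUnit (q m)) : FaithfulSMul R M := by
  obtain ⟨e, he, hmul⟩ := Module.exists_mem_annihilator_forall_mul_eq R M
  have hee : e * e = 0 := hm.mul_left_eq_zero.mp <| by
    rw [← smul_eq_mul, ← q.map_smul, Module.mem_annihilator.mp he, q.map_zero]
  have he0 : e = 0 := by rw [← hmul e he, hee]
  refine Module.annihilator_eq_bot.mp (eq_bot_iff.mpr fun r hr => ?_)
  rw [Submodule.mem_bot, ← hmul r hr, he0, mul_zero]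

theorem nontrivial_quotient_tensorProduct_of_faithfulSMul {R M : Type*} [CommRing R]
    [AddCommGroup M] [Module R M] [Module.Finite R M] [FaithfulSMul R M] {I : Ideal R}
    (hI : I ≠ ⊤) : Nontrivial ((R ⧸ I) ⊗[R] M) := by
  rw [(quotTensorEquivQuotSMul M I).nontrivial_congr, Submodule.Quotient.nontrivial_iff]
  intro htop
  obtain ⟨a, ha, hann⟩ := Submodule.exists_sub_one_mem_and_smul_eq_zero_of_fg_of_le_smul
    I ⊤ Module.Finite.fg_top htop.ge
  have ha0 : a = 0 :=
    FaithfulSMul.eq_of_smul_eq_smul (α := M) fun m => by rw [hann m trivial, zero_smul]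
  rw [ha0, zero_sub, I.neg_mem_iff, ← I.eq_top_iff_one] at ha
  exact hI ha

theorem IsNonsingularQF.exists_notMem {R : Type u} {M : Type v} [CommRing R] [AddCommGroup M]
    [Module R M] [Module.Finite R M] [Module.Projective R M] [FaithfulSMul R M]
    {q : QuadraticForm R M} (hq : IsNonsingularQF q) (𝔪 : Ideal R) [𝔪.IsMaximal] :
    ∃ m, q m ∉ 𝔪 := by
  by_contra! h
  let := Ideal.Quotient.field 𝔪
  obtain ⟨B, rfl⟩ := LinearMap.BilinMap.toQuadraticMap_surjective_of_projective q
  let Q := (LinearMap.BilinForm.baseChange (R ⧸ 𝔪) B).toQuadraticMap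
  have hQ_tmul : ∀ (t : R ⧸ 𝔪) (m : M),
      Q (t ⊗ₜ m) = t ^ 2 * algebraMap R _ (B.toQuadraticMap m) := by
    intro t m
    simp only [Q, LinearMap.BilinMap.toQuadraticMap_apply, LinearMap.BilinForm.baseChange_tmul,
      Algebra.smul_def]
    ring
  have hQ_polar : ∀ (t t' : R ⧸ 𝔪) (m m' : M),
      QuadraticMap.polar Q (t ⊗ₜ m) (t' ⊗ₜ m') =
      t * t' * algebraMap R _ (QuadraticMap.polar B.toQuadraticMap m m') := by
    intro t t' m m'
    simp only [Q, LinearMap.BilinMap.polar_toQuadraticMap, LinearMap.BilinForm.baseChange_tmul,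
      Algebra.smul_def, map_add]
    ring
  have hQ : ∀ z, Q z = 0 := by
    intro z
    obtain ⟨m, rfl⟩ :=
      TensorProduct.mk_surjective R M (R ⧸ 𝔪) Ideal.Quotient.mk_surjective z
    simpa [hQ_tmul, Ideal.Quotient.eq_zero_iff_mem] using h m
  have : Subsingleton ((R ⧸ 𝔪) ⊗[R] M) := subsingleton_of_forall_eq 0 fun z =>
    hq (R ⧸ 𝔪) Q hQ_tmul hQ_polar z (hQ z) fun w => by simp [QuadraticMap.polar, hQ]
  exact not_nontrivial _ (nontrivial_quotient_tensorProduct_of_faithfulSMul (M := M)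
    (Ideal.IsMaximal.ne_top ‹_›))

open MvPolynomial in
theorem QuadraticMap.exists_mvPolynomial_eval_eq {R ι : Type*} [CommRing R] [Fintype ι]
    (q : QuadraticMap R (ι → R) R) : ∃ P : MvPolynomial ι R, ∀ r, eval r P = q r := by
  obtain ⟨B, rfl⟩ := LinearMap.BilinMap.toQuadraticMap_surjective q
  let b := Pi.basisFun R ι
  refine ⟨∑ i, ∑ j, C (B (b i) (b j)) * (X i * X j), fun r => ?_⟩
  conv_rhs => rw [LinearMap.BilinMap.toQuadraticMap_apply, ← b.sum_repr r]
  simp only [b, map_sum, LinearMap.sum_apply, map_smul, LinearMap.smul_apply, smul_eq_mul,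
    map_mul, eval_C, eval_X, Pi.basisFun_repr, Finset.mul_sum]
  rw [Finset.sum_comm]
  exact Finset.sum_congr rfl fun i _ => Finset.sum_congr rfl fun j _ => by ring

open MvPolynomial in
theorem IsLGRing.exists_isUnit_eval {R : Type*} [CommRing R] (hR : IsLGRing R) {n : ℕ}
    (f : MvPolynomial (Fin n) R)
    (hf : ∀ 𝔪 : Ideal R, 𝔪.IsMaximal →
      ∃ v : Fin n → R ⧸ 𝔪, IsUnit (eval v (map (Ideal.Quotient.mk 𝔪) f))) :
    ∃ u : Fin n → R, IsUnit (eval u f) := by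
  obtain ⟨u, hu⟩ := hR (n + 1) n.succ_pos (rename Fin.castSucc f) fun 𝔪 h𝔪 => by
    obtain ⟨v, hv⟩ := hf 𝔪 h𝔪
    exact ⟨Fin.snoc v 0, by rwa [map_rename, eval_rename, Fin.snoc_comp_castSucc]⟩
  exact ⟨u ∘ Fin.castSucc, by rwa [eval_rename] at hu⟩

theorem IsLGRing.exists_isUnit_of_forall_exists_notMem {R M : Type*} [CommRing R]
    [AddCommGroup M] [Module R M] [Module.Finite R M] (hR : IsLGRing R) (q : QuadraticForm R M)
    (hq : ∀ 𝔪 : Ideal R, 𝔪.IsMaximal → ∃ m, q m ∉ 𝔪) : ∃ m, IsUnit (q m) := by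
  obtain ⟨n, g, hg⟩ := Module.Finite.exists_fin' R M
  obtain ⟨P, hP⟩ := (q.comp g).exists_mvPolynomial_eval_eq
  obtain ⟨u, hu⟩ := hR.exists_isUnit_eval P fun 𝔪 h𝔪 => by
    obtain ⟨m, hm⟩ := hq 𝔪 h𝔪
    obtain ⟨r, rfl⟩ := hg m
    let := Ideal.Quotient.field 𝔪
    refine ⟨Ideal.Quotient.mk 𝔪 ∘ r, ?_⟩
    rw [← MvPolynomial.map_eval, hP, isUnit_iff_ne_zero, Ne, Ideal.Quotient.eq_zero_iff_mem]
    exact hm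
  exact ⟨g u, hP u ▸ hu⟩

/-- Let `R` be an LG-ring and `(M, q)` a nonsingular quadratic form on
a finitely generated projective `R`-module.  Then `q` represents a unit of `R` if and
only if `M` is faithfully projective (i.e., being already finitely generated projective,
faithful). -/
theorem lg_ring_quadratic_space_represents_unit_iff_faithful
    {R : Type u} [CommRing R] (hR : IsLGRing R)
    {M : Type u} [AddCommGroup M] [Module R M]
    [Module.Finite R M] [Module.Projective R M]
    (q : QuadraticForm R M) (hq : IsNonsingularQF q) :
    (∃ m : M, IsUnit (q m)) ↔ FaithfulSMul R M :=
  ⟨fun ⟨_, hm⟩ => q.faithfulSMul_of_isUnit hm,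
    fun _ => hR.exists_isUnit_of_forall_exists_notMem q fun 𝔪 _ => hq.exists_notMem 𝔪⟩
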